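/- arXiv:0708.0714 — 3 statements merged into one kernel-verified Lean document; each statement's English description precedes it below -/
import Mathlib

section
/- The group G(4,4,3) has no subgroup of order 12 that is core-free; in particular no subgroup of G(4,4,3) isomorphic to A₄ is core-free. -/
open Multiplicative

/-- Cyclic group of order m, multiplicatively. -/
abbrev Cyc (m : ℕ) := Multiplicative (ZMod m)

/-- Minimal faithful permutation degree. -/
noncomputable def mu (G : Type*) [Group G] : ℕ :=
  sInf {n | ∃ f : G →* Equiv.Perm (Fin n), Function.Injective f}

/-- Sym(n) acting on the base group (C_m)^n by permuting coordinates. -/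
def wreathAut (m n : ℕ) : Equiv.Perm (Fin n) →* MulAut (Fin n → Cyc m) where
  toFun σ :=
    { toFun := fun θ => θ ∘ σ.symm
      invFun := fun θ => θ ∘ σ
      left_inv := fun θ => by ext i; simp
      right_inv := fun θ => by ext i; simp
      map_mul' := fun θ₁ θ₂ => rfl }
  map_one' := by ext θ i; rfl
  map_mul' := fun σ τ => by ext θ i; rfl

/-- The wreath product C_m ≀ Sym(n). -/
abbrev Wr (m n : ℕ) := SemidirectProduct (Fin n → Cyc m) (Equiv.Perm (Fin n)) (wreathAut m n)

/-- A(m,p,n) = {θ ∈ (C_m)^n | (θ₁⋯θₙ)^{m/p} = 1}. -/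
def Apn (m p n : ℕ) : Subgroup (Fin n → Cyc m) where
  carrier := {θ | (∏ i, θ i) ^ (m / p) = 1}
  one_mem' := by simp
  mul_mem' := by
    intro α β hα hβ
    simp only [Set.mem_setOf_eq, Pi.mul_apply] at *
    rw [Finset.prod_mul_distrib, mul_pow, hα, hβ, one_mul]
  inv_mem' := by
    intro α hα
    simp only [Set.mem_setOf_eq, Pi.inv_apply] at *
    rw [Finset.prod_inv_distrib, inv_pow, hα, inv_one]

lemma apn_act_mem {m p n : ℕ} (σ : Equiv.Perm (Fin n)) {θ : Fin n → Cyc m}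
    (hθ : θ ∈ Apn m p n) : wreathAut m n σ θ ∈ Apn m p n := by
  have : ∏ i, θ (σ.symm i) = ∏ i, θ i := Equiv.prod_comp σ.symm θ
  simpa [Apn, wreathAut, Subgroup.mem_mk, Set.mem_setOf_eq, Function.comp, this] using hθ

/-- G(m,p,n) = A(m,p,n) ⋊ Sym(n), realized inside C_m ≀ Sym(n). -/
def Gmpn (m p n : ℕ) : Subgroup (Wr m n) where
  carrier := {g | g.left ∈ Apn m p n}
  one_mem' := by
    show (1 : Wr m n).left ∈ Apn m p n
    rw [SemidirectProduct.one_left]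
    exact one_mem _
  mul_mem' := by
    intro g h hg hh
    show (g * h).left ∈ Apn m p n
    rw [SemidirectProduct.mul_left]
    exact mul_mem hg (apn_act_mem g.right hh)
  inv_mem' := by
    intro g hg
    show g⁻¹.left ∈ Apn m p n
    rw [SemidirectProduct.inv_left]
    exact apn_act_mem _ (inv_mem hg)

/-! Let `L ≤ G(4,4,3)` have order 12. Its image in `Sym(3)` has order at most 6, so `L` meets the
base `A(4,4,3) ≅ C₄ × C₄` nontrivially, and by Cauchy `L` has an element of order 3, which (as `A`
has exponent 4) acts on `A` by a 3-cycle. The subgroup `L ∩ A` is invariant under that 3-cycle, and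
every nontrivial invariant subgroup of `A` contains `(2,2,0)`. So `(2,2,0)` lies in every subgroup
of order 12, in particular in every conjugate of `L`, hence in its normal core. -/

open SemidirectProduct

lemma Subgroup.exists_ne_one_mem_ker_of_card_lt {G H : Type*} [Group G] [Group H] [Finite H]
    (L : Subgroup G) (f : G →* H) (hcard : Nat.card H < Nat.card L) :
    ∃ w ∈ L, w ≠ 1 ∧ f w = 1 := by
  have hninj : ¬ Function.Injective (f.comp L.subtype) := fun hinj =>
    (Nat.card_le_card_of_injective _ hinj).not_gt hcard
  rw [injective_iff_map_eq_one] at hninj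
  push Not at hninj
  obtain ⟨w, hw, hw1⟩ := hninj
  exact ⟨w, w.2, by simpa using hw1, hw⟩

lemma Subgroup.mem_normalCore_of_forall_card_eq {G : Type*} [Group G] {L : Subgroup G} {a : G}
    (h : ∀ H : Subgroup G, Nat.card H = Nat.card L → a ∈ H) : a ∈ L.normalCore := by
  intro b
  have := h (L.map (MulAut.conj b⁻¹).toMonoidHom)
    (Subgroup.card_map_of_injective (MulAut.conj b⁻¹).injective)
  obtain ⟨c, hc, rfl⟩ : ∃ c ∈ L, b⁻¹ * c * b = a := by simpa using this
  simpa [mul_assoc] using hc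

lemma SemidirectProduct.mul_inl_mul_inv {N G : Type*} [CommGroup N] [Group G] {φ : G →* MulAut N}
    (b : N ⋊[φ] G) (n : N) : b * inl n * b⁻¹ = inl (φ b.right n) := by
  ext
  · simp [mul_left, inv_left, mul_assoc, mul_comm]
  · simp [mul_right, inv_right]

lemma SemidirectProduct.eq_inl_of_right_eq_one {N G : Type*} [Group N] [Group G]
    {φ : G →* MulAut N} {g : N ⋊[φ] G} (hg : g.right = 1) : g = inl g.left := by
  ext <;> simp [hg]

lemma Cyc.pow_self_eq_one {m : ℕ} (a : Cyc m) : a ^ m = 1 := by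
  rw [← ofAdd_toAdd a, ← ofAdd_nsmul, nsmul_eq_mul, ZMod.natCast_self, zero_mul, ofAdd_zero]

lemma Wr.pow_eq_one_of_right_eq_one {m n : ℕ} {g : Wr m n} (hg : g.right = 1) : g ^ m = 1 := by
  have hleft : g.left ^ m = 1 := funext fun i => Cyc.pow_self_eq_one _
  rw [eq_inl_of_right_eq_one hg, ← map_pow, hleft, map_one]

lemma mem_Apn_self_iff {m n : ℕ} (hm : m ≠ 0) {θ : Fin n → Cyc m} :
    θ ∈ Apn m m n ↔ ∏ i, θ i = 1 := by
  rw [show θ ∈ Apn m m n ↔ (∏ i, θ i) ^ (m / m) = 1 from Iff.rfl, Nat.div_self (by omega), pow_one]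

def twoTwoZero : Fin 3 → Cyc 4 := ![ofAdd 2, ofAdd 2, ofAdd 0]

/- Checked by enumeration. The reason: the 3-cycle `σ` fixes no nontrivial element of
`A(4,4,3) ≅ C₄ × C₄`, and every nontrivial `σ`-invariant subgroup contains the 2-torsion
`{1, (2,2,0), (2,0,2), (0,2,2)}`. -/
set_option maxRecDepth 10000 in
lemma exists_twoTwoZero_eq (σ : Equiv.Perm (Fin 3)) (hσ3 : σ ^ 3 = 1) (hσ1 : σ ≠ 1)
    (θ : Fin 3 → Cyc 4) (hθ : ∏ i, θ i = 1) (hθ1 : θ ≠ 1) :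
    ∃ i j k : Fin 4, twoTwoZero =
      θ ^ (i : ℕ) * wreathAut 4 3 σ θ ^ (j : ℕ) * wreathAut 4 3 (σ ^ 2) θ ^ (k : ℕ) := by
  revert σ θ
  decide

lemma twoTwoZero_mem_of_invariant {N : Subgroup (Fin 3 → Cyc 4)} {σ : Equiv.Perm (Fin 3)}
    (hσ3 : σ ^ 3 = 1) (hσ1 : σ ≠ 1) (hN : ∀ θ ∈ N, wreathAut 4 3 σ θ ∈ N)
    {θ : Fin 3 → Cyc 4} (hθN : θ ∈ N) (hθA : θ ∈ Apn 4 4 3) (hθ1 : θ ≠ 1) : twoTwoZero ∈ N := by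
  obtain ⟨i, j, k, h⟩ :=
    exists_twoTwoZero_eq σ hσ3 hσ1 θ ((mem_Apn_self_iff (by norm_num)).1 hθA) hθ1
  have hσθ := hN θ hθN
  have hσσθ : wreathAut 4 3 (σ ^ 2) θ ∈ N := by
    rw [pow_two, map_mul, MulAut.mul_apply]; exact hN _ hσθ
  rw [h]
  exact N.mul_mem (N.mul_mem (N.pow_mem hθN _) (N.pow_mem hσθ _)) (N.pow_mem hσσθ _)

lemma inl_twoTwoZero_mem_of_card_eq_twelve {M : Subgroup (Wr 4 3)} (hM : M ≤ Gmpn 4 4 3)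
    (hcard : Nat.card M = 12) : inl twoTwoZero ∈ M := by
  have : Finite M := Nat.finite_of_card_ne_zero (by rw [hcard]; norm_num)
  obtain ⟨x, hx⟩ : ∃ x : M, orderOf x = 3 :=
    exists_prime_orderOf_dvd_card' 3 (by rw [hcard]; norm_num)
  have hx3 : (x : Wr 4 3).right ^ 3 = 1 := by
    have h3 : x ^ 3 = 1 := orderOf_dvd_iff_pow_eq_one.mp (dvd_of_eq hx)
    rw [← rightHom_eq_right, ← map_pow, ← Subgroup.coe_pow, h3]; rfl
  have hx1 : (x : Wr 4 3).right ≠ 1 := fun h => by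
    have := orderOf_dvd_of_pow_eq_one (Subtype.ext (Wr.pow_eq_one_of_right_eq_one h) : x ^ 4 = 1)
    rw [hx] at this; norm_num at this
  obtain ⟨w, hwM, hw1, hwr⟩ := M.exists_ne_one_mem_ker_of_card_lt rightHom (by
    rw [hcard, Nat.card_perm, Nat.card_fin]; norm_num)
  rw [rightHom_eq_right] at hwr
  refine twoTwoZero_mem_of_invariant (N := M.comap inl) hx3 hx1 (fun θ hθ => ?_)
    (θ := w.left) ?_ (hM hwM) ?_
  · rw [Subgroup.mem_comap, ← mul_inl_mul_inv]
    exact M.mul_mem (M.mul_mem x.2 hθ) (M.inv_mem x.2)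
  · rwa [Subgroup.mem_comap, ← eq_inl_of_right_eq_one hwr]
  · rintro h
    exact hw1 (by rw [eq_inl_of_right_eq_one hwr, h, map_one])

lemma twoTwoZero_mem_Apn : twoTwoZero ∈ Apn 4 4 3 :=
  (mem_Apn_self_iff (by norm_num)).2 (by decide)

lemma Gmpn.mem_of_card_eq_twelve {L : Subgroup (Gmpn 4 4 3)} (hL : Nat.card L = 12) :
    (⟨inl twoTwoZero, twoTwoZero_mem_Apn⟩ : Gmpn 4 4 3) ∈ L := by
  have hinj := (Gmpn 4 4 3).subtype_injective
  rw [← Subgroup.mem_map_iff_mem hinj]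
  exact inl_twoTwoZero_mem_of_card_eq_twelve (Subgroup.map_subtype_le L)
    (by rw [Subgroup.card_map_of_injective hinj, hL])

lemma Gmpn.normalCore_ne_bot_of_card_eq_twelve {L : Subgroup (Gmpn 4 4 3)}
    (hL : Nat.card L = 12) : L.normalCore ≠ ⊥ := by
  intro hbot
  have hcore := Subgroup.mem_normalCore_of_forall_card_eq (L := L)
    fun H hH => Gmpn.mem_of_card_eq_twelve (hH.trans hL)
  rw [hbot, Subgroup.mem_bot, Subtype.ext_iff, OneMemClass.coe_one, ← map_one inl, inl_inj]
    at hcore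
  exact absurd hcore (by decide)

theorem stmt10 :
    (∀ L : Subgroup (Gmpn 4 4 3), Nat.card L = 12 → L.normalCore ≠ ⊥) ∧
    (∀ L : Subgroup (Gmpn 4 4 3), Nonempty (L ≃* alternatingGroup (Fin 4)) →
      L.normalCore ≠ ⊥) := by
  refine ⟨fun L hL => Gmpn.normalCore_ne_bot_of_card_eq_twelve hL, fun L ⟨e⟩ => ?_⟩
  apply Gmpn.normalCore_ne_bot_of_card_eq_twelve
  rw [Nat.card_congr e.toEquiv, nat_card_alternatingGroup, Nat.card_fin]
  rfl
end

section
/- μ(C₄ × C₄ × C₄) = 12, and hence the wreath product W = C₄ ≀ Sym(3) satisfies μ(W) = 12. -/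
open Multiplicative

/-! A faithful action of an abelian group embeds it into the product of its orbits. For a 2-group
the orbits have sizes `2 ^ k`, and `(2 ^ k) ^ 2 ≤ 2 ^ 2 ^ k`, so an abelian 2-group acting
faithfully on `n` points has `|G| ^ 2 ≤ 2 ^ n`. For `C₄³` this reads `2 ^ 12 ≤ 2 ^ n`, while the
imprimitive action of `C₄ ≀ Sym(3)` on three blocks of four points is faithful on `12` points. -/

open Function MulAction

lemma two_pow_sq_le_two_pow_two_pow (k : ℕ) : (2 ^ k) ^ 2 ≤ 2 ^ 2 ^ k := by
  rw [← pow_mul]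
  refine Nat.pow_le_pow_right two_pos ?_
  induction k with
  | zero => simp
  | succ k ih => rcases k with _ | k <;> grind [pow_succ, Nat.one_le_two_pow]

section AbelianAction

variable {G α : Type*} [CommGroup G] [MulAction G α] [FaithfulSMul G α]

lemma injective_smul_orbitRel_out :
    Injective fun (g : G) (ω : orbitRel.Quotient G α) =>
      (⟨g • ω.out, mem_orbit _ g⟩ : orbit G ω.out) := by
  intro g h hgh
  -- commutativity: agreeing on a representative `ω.out` means agreeing on its whole orbit
  refine FaithfulSMul.eq_of_smul_eq_smul (α := α) fun x => ?_
  let ω : orbitRel.Quotient G α := Quotient.mk _ x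
  obtain ⟨k, hk⟩ : x ∈ orbit G ω.out :=
    mem_orbit_symm.mp (Quotient.mk_out (s := orbitRel G α) x)
  have hout := congrArg Subtype.val (congrFun hgh ω)
  rw [← hk, smul_comm g k, smul_comm h k]
  exact congrArg (k • ·) hout

variable [Finite α]

lemma card_le_prod_card_orbit [Fintype (orbitRel.Quotient G α)] :
    Nat.card G ≤ ∏ ω : orbitRel.Quotient G α, Nat.card (orbit G ω.out) := by
  rw [← Nat.card_pi]
  exact Nat.card_le_card_of_injective _ injective_smul_orbitRel_out

lemma sq_card_le_two_pow_card (hG : IsPGroup 2 G) : Nat.card G ^ 2 ≤ 2 ^ Nat.card α := by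
  have := Fintype.ofFinite (orbitRel.Quotient G α)
  have hα : Nat.card α = ∑ ω : orbitRel.Quotient G α, Nat.card (orbit G ω.out) := by
    rw [Nat.card_congr (selfEquivSigmaOrbits G α), Nat.card_sigma]
  have horbit (ω : orbitRel.Quotient G α) :
      Nat.card (orbit G ω.out) ^ 2 ≤ 2 ^ Nat.card (orbit G ω.out) := by
    obtain ⟨k, hk⟩ := hG.card_orbit ω.out
    exact hk ▸ two_pow_sq_le_two_pow_two_pow k
  calc Nat.card G ^ 2 ≤ (∏ ω : orbitRel.Quotient G α, Nat.card (orbit G ω.out)) ^ 2 :=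
        Nat.pow_le_pow_left card_le_prod_card_orbit 2
    _ = ∏ ω : orbitRel.Quotient G α, Nat.card (orbit G ω.out) ^ 2 := (Finset.prod_pow ..).symm
    _ ≤ ∏ ω : orbitRel.Quotient G α, 2 ^ Nat.card (orbit G ω.out) :=
        Finset.prod_le_prod' fun ω _ => horbit ω
    _ = 2 ^ Nat.card α := by rw [Finset.prod_pow_eq_pow_sum, hα]

end AbelianAction

lemma sq_card_le_two_pow_of_injective {G : Type*} [CommGroup G] (hG : IsPGroup 2 G) {n : ℕ}
    {f : G →* Equiv.Perm (Fin n)} (hf : Injective f) : Nat.card G ^ 2 ≤ 2 ^ n := by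
  let := MulAction.compHom (Fin n) f
  have : FaithfulSMul G (Fin n) :=
    ⟨fun h => hf (Equiv.ext fun x => h x)⟩
  simpa using sq_card_le_two_pow_card (α := Fin n) hG

lemma mu_eq_of_isLeast {G : Type*} [Group G] {N : ℕ}
    (hN : ∃ f : G →* Equiv.Perm (Fin N), Injective f)
    (hle : ∀ n (f : G →* Equiv.Perm (Fin n)), Injective f → N ≤ n) : mu G = N :=
  IsLeast.csInf_eq ⟨hN, fun n ⟨f, hf⟩ => hle n f hf⟩

/-- The imprimitive action of `C_m ≀ Sym(n)` on `n` blocks of size `m`: `(θ, σ)` sends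
`(i, x)` to `(σ i, θ (σ i) + x)`. -/
def wrPerm (m n : ℕ) : Wr m n →* Equiv.Perm (Fin n × ZMod m) where
  toFun g := Equiv.prodShear g.right fun i => Equiv.addLeft (toAdd (g.left (g.right i)))
  map_one' := by ext ⟨i, x⟩ <;> simp [Equiv.prodShear]
  map_mul' g h := by ext ⟨i, x⟩ <;> simp [Equiv.prodShear, wreathAut]

lemma wrPerm_injective (m n : ℕ) : Injective (wrPerm m n) := by
  rw [injective_iff_map_eq_one]
  intro g hg
  have hfix (p : Fin n × ZMod m) : wrPerm m n g p = p := by rw [hg]; rfl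
  have hright : g.right = 1 := Equiv.ext fun i => by
    simpa [wrPerm, Equiv.prodShear] using congrArg Prod.fst (hfix (i, 0))
  have hleft : g.left = 1 := funext fun i => by
    simpa [wrPerm, Equiv.prodShear] using congrArg Prod.snd (hfix (g.right.symm i, 0))
  ext <;> simp [hleft, hright]

lemma exists_injective_wr_perm_fin (m n : ℕ) [NeZero m] :
    ∃ f : Wr m n →* Equiv.Perm (Fin (n * m)), Injective f := by
  let e : Fin n × ZMod m ≃ Fin (n * m) := Fintype.equivFinOfCardEq (by simp)
  exact ⟨(e.permCongrHom : _ →* _).comp (wrPerm m n),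
    e.permCongrHom.injective.comp (wrPerm_injective m n)⟩

theorem stmt14 : mu (Fin 3 → Cyc 4) = 12 ∧ mu (Wr 4 3) = 12 := by
  obtain ⟨f, hf⟩ := exists_injective_wr_perm_fin 4 3
  have hcard : Nat.card (Fin 3 → Cyc 4) = 2 ^ 6 := by simp
  have base_le (n : ℕ) (g : (Fin 3 → Cyc 4) →* Equiv.Perm (Fin n)) (hg : Injective g) :
      12 ≤ n := by
    have := sq_card_le_two_pow_of_injective (IsPGroup.of_card hcard) hg
    rw [hcard, ← pow_mul] at this
    exact (Nat.pow_le_pow_iff_right one_lt_two).mp this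
  exact ⟨mu_eq_of_isLeast
      ⟨f.comp SemidirectProduct.inl, hf.comp SemidirectProduct.inl_injective⟩ base_le,
    mu_eq_of_isLeast ⟨f, hf⟩ fun n g hg =>
      base_le n (g.comp SemidirectProduct.inl) (hg.comp SemidirectProduct.inl_injective)⟩
end

section
/- There exist finite groups G and H with μ(G × H) < μ(G) + μ(H); specifically, for G = G(4,4,3) and H = C₄, μ(G × H) = 12 while μ(G) + μ(H) = 16. -/
open Multiplicative

/-!
`C₄ ≀ Sym(3)` acts faithfully on `3 × 4 = 12` points and contains `G(4,4,3) × C₄`, the factor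
`C₄` embedded as the diagonal centre (which meets `G(4,4,3)` trivially because `c³ = 1` forces
`c = 1` in `C₄`). Hence `μ(G × C₄) ≤ 12`, while `μ(C₄) = 4` since `4 ∤ n!` for `n < 4`.

For `μ(G) ≥ 12`, with `|G| = 96`: a faithful action moves `v = (2,2,0) ∈ A(4,4,3)`, so some point
stabiliser `H` misses `v`, and it suffices that such an `H` has order at most `8`. Let `K = H ∩ A`
and `R` the image of `H` in `Sym(3)`, so `|H| = |K| |R|` with `|K| ∣ 16` and `|R| ∣ 6`. If
`|K| ≥ 8`, then `K` has index at most `2` in `A` and contains `v = (1,1,2)²`. Otherwise `|H| ≥ 9`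
forces `2 ∣ |K|` and `3 ∣ |R|`, i.e. an involution of `A` and a `3`-cycle of permutation parts in
`H`; but conjugating by the latter permutes the three involutions `(2,2,0), (2,0,2), (0,2,2)` of `A`
cyclically, so `v ∈ H`.
-/

open SemidirectProduct

section MinimalDegree

variable {G : Type*} [Group G]

theorem exists_injective_perm_fin_card {α : Type*} [Finite α] (f : G →* Equiv.Perm α)
    (hf : Function.Injective f) :
    ∃ f' : G →* Equiv.Perm (Fin (Nat.card α)), Function.Injective f' :=
  let e := Finite.equivFin α
  ⟨e.permCongrHom.toMonoidHom.comp f, e.permCongrHom.injective.comp hf⟩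

theorem mu_le_card_of_injective {α : Type*} [Finite α] (f : G →* Equiv.Perm α)
    (hf : Function.Injective f) : mu G ≤ Nat.card α :=
  Nat.sInf_le (exists_injective_perm_fin_card f hf)

theorem exists_injective_perm_fin_mu [Finite G] :
    ∃ f : G →* Equiv.Perm (Fin (mu G)), Function.Injective f :=
  Nat.sInf_mem (s := {n | ∃ f : G →* Equiv.Perm (Fin n), Function.Injective f})
    ⟨_, exists_injective_perm_fin_card (MulAction.toPermHom G G) MulAction.toPerm_injective⟩

theorem mu_le_card [Finite G] : mu G ≤ Nat.card G :=
  mu_le_card_of_injective (MulAction.toPermHom G G) MulAction.toPerm_injective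

theorem le_mu [Finite G] {d : ℕ}
    (h : ∀ n (f : G →* Equiv.Perm (Fin n)), Function.Injective f → d ≤ n) : d ≤ mu G :=
  let ⟨f, hf⟩ := exists_injective_perm_fin_mu (G := G)
  h _ f hf

theorem mu_le_mu_of_injective {H : Type*} [Group H] [Finite H] (f : G →* H)
    (hf : Function.Injective f) : mu G ≤ mu H := by
  obtain ⟨g, hg⟩ := exists_injective_perm_fin_mu (G := H)
  simpa using mu_le_card_of_injective (g.comp f) (hg.comp hf)

theorem card_dvd_factorial_of_injective {α : Type*} [Finite α] (f : G →* Equiv.Perm α)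
    (hf : Function.Injective f) : Nat.card G ∣ (Nat.card α).factorial := by
  simpa [Nat.card_perm] using Subgroup.card_dvd_of_injective f hf

theorem mu_cyc_four : mu (Cyc 4) = 4 := by
  refine le_antisymm (by simpa using mu_le_card (G := Cyc 4)) (le_mu fun n f hf => ?_)
  have h := card_dvd_factorial_of_injective f hf
  simp only [Nat.card_eq_fintype_card, Fintype.card_fin] at h
  by_contra! hn
  interval_cases n <;> simp_all [Nat.factorial]

theorem exists_notMem_index_le_card {α : Type*} [Finite α]
    (f : G →* Equiv.Perm α) {g : G} (hg : f g ≠ 1) :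
    ∃ H : Subgroup G, g ∉ H ∧ H.index ≤ Nat.card α := by
  obtain ⟨x, hx⟩ : ∃ x, f g x ≠ x := by
    by_contra! h
    exact hg (Equiv.ext h)
  let := MulAction.compHom α f
  exact ⟨MulAction.stabilizer G x, hx,
    (MulAction.index_stabilizer G x).trans_le (Set.ncard_le_card _)⟩

end MinimalDegree

namespace SemidirectProduct

variable {N K : Type*} [Group N] [Group K] {φ : K →* MulAut N}

instance [Finite N] [Finite K] : Finite (N ⋊[φ] K) := Finite.of_equiv _ equivProd.symm

theorem card_subgroup (H : Subgroup (N ⋊[φ] K)) :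
    Nat.card H = Nat.card (H.comap inl) * Nat.card (H.map rightHom) := by
  have hker : Nat.card ↥(rightHom.ker ⊓ H) = Nat.card (H.comap inl) := by
    rw [← range_inl_eq_ker_rightHom, ← Subgroup.map_comap_eq,
      Subgroup.card_map_of_injective inl_injective]
  rw [← hker, ← Subgroup.relIndex_ker, ← Subgroup.inf_relIndex_right,
    ← Subgroup.relIndex_bot_left, ← Subgroup.relIndex_bot_left,
    Subgroup.relIndex_mul_relIndex _ _ _ bot_le inf_le_right]

theorem mul_inl_mul_inv_s17 {N : Type*} [CommGroup N] {φ : K →* MulAut N} (g : N ⋊[φ] K) (n : N) :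
    g * inl n * g⁻¹ = inl (φ g.right n) := by
  ext <;> simp [mul_comm, mul_left_comm]

end SemidirectProduct

theorem Subgroup.pow_mem_of_relIndex_dvd {G : Type*} [Group G] (H : Subgroup G) [H.Normal]
    {K : Subgroup G} {g : G} (hg : g ∈ K) {k : ℕ} (hk : H.relIndex K ∣ k) : g ^ k ∈ H := by
  obtain ⟨c, rfl⟩ := hk
  rw [pow_mul]
  exact pow_mem (H.pow_relIndex_mem hg) c

section Wreath

variable {m n : ℕ}

@[simp]
theorem wreathAut_apply (σ : Equiv.Perm (Fin n)) (θ : Fin n → Cyc m) (i : Fin n) :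
    wreathAut m n σ θ i = θ (σ.symm i) := rfl

def wreathPerm (m n : ℕ) : Wr m n →* Equiv.Perm (Fin n × ZMod m) where
  toFun g :=
    { toFun := fun p => (g.right p.1, (g.left (g.right p.1)).toAdd + p.2)
      invFun := fun p => (g.right.symm p.1, p.2 - (g.left p.1).toAdd)
      left_inv := fun p => by simp
      right_inv := fun p => by simp }
  map_one' := by ext p <;> simp
  map_mul' g h := by ext p <;> simp [add_assoc]

theorem wreathPerm_injective : Function.Injective (wreathPerm m n) := by
  rw [injective_iff_map_eq_one]
  intro g hg
  have hpt (i : Fin n) := congr($hg (i, 0))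
  simp only [wreathPerm, MonoidHom.coe_mk, OneHom.coe_mk, Equiv.coe_fn_mk, add_zero,
    Equiv.Perm.coe_one, id_eq, Prod.mk.injEq] at hpt
  have hr : g.right = 1 := Equiv.ext fun i => (hpt i).1
  ext i
  · simpa [hr] using (hpt i).2
  · simp [hr]

def wreathDiag (m n : ℕ) : Cyc m →* Wr m n := inl.comp (Pi.constMonoidHom (Fin n) (Cyc m))

theorem commute_wreathDiag (g : Wr m n) (c : Cyc m) : Commute g (wreathDiag m n c) := by
  ext <;> simp [wreathDiag, mul_comm]

theorem wreathDiag_injective [NeZero n] : Function.Injective (wreathDiag m n) :=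
  inl_injective.comp Function.const_injective

theorem comap_inl_Gmpn (p : ℕ) : (Gmpn m p n).comap inl = Apn m p n := rfl

theorem map_rightHom_Gmpn (p : ℕ) : (Gmpn m p n).map rightHom = ⊤ :=
  eq_top_iff.2 fun σ _ => ⟨inr σ, one_mem (Apn m p n), rightHom_inr σ⟩

theorem card_Gmpn (p : ℕ) : Nat.card (Gmpn m p n) = Nat.card (Apn m p n) * n.factorial := by
  rw [card_subgroup, comap_inl_Gmpn, map_rightHom_Gmpn, Subgroup.card_top, Nat.card_perm,
    Nat.card_fin]

end Wreath

instance {m p n : ℕ} : DecidablePred (· ∈ Apn m p n) := fun θ =>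
  decidable_of_iff ((∏ i, θ i) ^ (m / p) = 1) Iff.rfl

def v220 : Fin 3 → Cyc 4 := fun i => ofAdd (![2, 2, 0] i)

def v112 : Fin 3 → Cyc 4 := fun i => ofAdd (![1, 1, 2] i)

theorem v112_mem : v112 ∈ Apn 4 4 3 := by decide

theorem v112_sq : v112 ^ 2 = v220 := by decide

theorem v220_mem : v220 ∈ Apn 4 4 3 := v112_sq ▸ pow_mem v112_mem 2

theorem v220_ne_one : v220 ≠ 1 := by decide

theorem card_Apn_443 : Nat.card (Apn 4 4 3) = 16 := by
  rw [Nat.card_eq_fintype_card]; decide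

theorem card_Gmpn_443 : Nat.card (Gmpn 4 4 3) = 96 := by
  rw [card_Gmpn, card_Apn_443]; rfl

theorem eq_one_of_const_mem_Apn_443 : ∀ c : Cyc 4, (fun _ => c) ∈ Apn 4 4 3 → c = 1 := by
  decide

theorem exists_wreathAut_pow_eq_v220 : ∀ σ : Equiv.Perm (Fin 3), σ ^ 3 = 1 → σ ≠ 1 →
    ∀ θ ∈ Apn 4 4 3, θ ^ 2 = 1 → θ ≠ 1 → ∃ k : Fin 3, wreathAut 4 3 (σ ^ (k : ℕ)) θ = v220 := by
  decide

theorem v220_mem_of_eight_le_card {K : Subgroup (Fin 3 → Cyc 4)} (hK : K ≤ Apn 4 4 3)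
    (h8 : 8 ≤ Nat.card K) : v220 ∈ K := by
  have hcard : Nat.card K * K.relIndex (Apn 4 4 3) = 16 := by
    rw [← card_Apn_443, ← Subgroup.relIndex_bot_left, ← Subgroup.relIndex_bot_left,
      Subgroup.relIndex_mul_relIndex _ _ _ bot_le hK]
  have hdvd : K.relIndex (Apn 4 4 3) ∣ 2 := by
    have : K.relIndex (Apn 4 4 3) ≤ 2 := by nlinarith
    interval_cases K.relIndex (Apn 4 4 3) <;> omega
  exact v112_sq ▸ K.pow_mem_of_relIndex_dvd v112_mem hdvd

theorem inl_v220_mem_of_dvd_card {H : Subgroup (Wr 4 3)} (hH : H.comap inl ≤ Apn 4 4 3)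
    (h2 : 2 ∣ Nat.card (H.comap inl)) (h3 : 3 ∣ Nat.card (H.map rightHom)) : inl v220 ∈ H := by
  obtain ⟨θ, hθ⟩ := exists_prime_orderOf_dvd_card' 2 h2
  obtain ⟨⟨σ, g, hgH, rfl⟩, hσ⟩ := exists_prime_orderOf_dvd_card' 3 h3
  rw [← Subgroup.orderOf_coe, orderOf_eq_prime_iff] at hθ hσ
  obtain ⟨k, hk⟩ := exists_wreathAut_pow_eq_v220 _ hσ.1 hσ.2 θ (hH θ.2) hθ.1 hθ.2
  have hconj : g ^ (k : ℕ) * inl (θ : Fin 3 → Cyc 4) * (g ^ (k : ℕ))⁻¹ = inl v220 := by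
    rw [mul_inl_mul_inv_s17, ← hk, ← rightHom_eq_right, map_pow]
  exact hconj ▸ H.mul_mem (H.mul_mem (H.pow_mem hgH _) θ.2) (H.inv_mem (H.pow_mem hgH _))

theorem card_le_eight_of_inl_v220_notMem {H : Subgroup (Wr 4 3)} (hH : H ≤ Gmpn 4 4 3)
    (hv : inl v220 ∉ H) : Nat.card H ≤ 8 := by
  have hK : H.comap inl ≤ Apn 4 4 3 := comap_inl_Gmpn 4 ▸ Subgroup.comap_mono hH
  have hK16 : Nat.card (H.comap inl) ∣ 16 := card_Apn_443 ▸ Subgroup.card_dvd_of_le hK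
  have hR6 : Nat.card (H.map rightHom) ∣ 6 := by
    have := Subgroup.card_subgroup_dvd_card (H.map rightHom)
    rwa [Nat.card_perm, Nat.card_fin] at this
  have hK4 : Nat.card (H.comap inl) ≤ 4 := by
    by_contra! h
    have : Nat.card (H.comap inl) ≤ 16 := Nat.le_of_dvd (by norm_num) hK16
    refine hv (v220_mem_of_eight_le_card hK ?_)
    interval_cases Nat.card (H.comap inl) <;> omega
  rw [card_subgroup]
  by_contra! h9
  have hR : Nat.card (H.map rightHom) ≤ 6 := Nat.le_of_dvd (by norm_num) hR6
  have : 2 ∣ Nat.card (H.comap inl) ∧ 3 ∣ Nat.card (H.map rightHom) := by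
    interval_cases Nat.card (H.comap inl) <;> interval_cases Nat.card (H.map rightHom) <;> omega
  exact hv (inl_v220_mem_of_dvd_card hK this.1 this.2)

def g220 : Gmpn 4 4 3 := ⟨inl v220, v220_mem⟩

theorem twelve_le_index_of_g220_notMem {H : Subgroup (Gmpn 4 4 3)} (hv : g220 ∉ H) :
    12 ≤ H.index := by
  have hcard : Nat.card H ≤ 8 := by
    rw [← Subgroup.card_map_of_injective (Gmpn 4 4 3).subtype_injective]
    exact card_le_eight_of_inl_v220_notMem (Subgroup.map_subtype_le H)
      ((Subgroup.mem_map_iff_mem (Gmpn 4 4 3).subtype_injective).not.2 hv)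
  have := H.card_mul_index
  rw [card_Gmpn_443] at this
  nlinarith

theorem twelve_le_card_of_injective {α : Type*} [Finite α] (f : Gmpn 4 4 3 →* Equiv.Perm α)
    (hf : Function.Injective f) : 12 ≤ Nat.card α := by
  have hg : f g220 ≠ 1 := fun h =>
    v220_ne_one (inl_injective (congr_arg Subtype.val (hf (h.trans (map_one f).symm))))
  obtain ⟨H, hv, hH⟩ := exists_notMem_index_le_card f hg
  exact (twelve_le_index_of_g220_notMem hv).trans hH

theorem twelve_le_mu_Gmpn : 12 ≤ mu (Gmpn 4 4 3) :=
  le_mu fun n f hf => by simpa using twelve_le_card_of_injective f hf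

theorem mu_Gmpn_prod_cyc_le_twelve : mu (Gmpn 4 4 3 × Cyc 4) ≤ 12 := by
  have hinj : Function.Injective ((Gmpn 4 4 3).subtype.noncommCoprod (wreathDiag 4 3)
      fun g c => commute_wreathDiag (g : Wr 4 3) c) := by
    refine (MonoidHom.noncommCoprod_injective _ _ _).2
      ⟨(Gmpn 4 4 3).subtype_injective, wreathDiag_injective, ?_⟩
    rw [Subgroup.range_subtype, disjoint_iff_inf_le]
    rintro _ ⟨hmem, c, rfl⟩
    rw [eq_one_of_const_mem_Apn_443 c hmem, map_one]
    exact Subgroup.one_mem _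
  simpa using mu_le_card_of_injective ((wreathPerm 4 3).comp _) (wreathPerm_injective.comp hinj)

theorem stmt17 :
    (∃ (G H : Type) (_ : Group G) (_ : Group H),
      Finite G ∧ Finite H ∧ mu (G × H) < mu G + mu H) ∧
    mu (Gmpn 4 4 3 × Cyc 4) = 12 ∧ mu (Gmpn 4 4 3) + mu (Cyc 4) = 16 := by
  have hmono : mu (Gmpn 4 4 3) ≤ mu (Gmpn 4 4 3 × Cyc 4) :=
    mu_le_mu_of_injective (MonoidHom.inl _ _) (Prod.mk_left_injective 1)
  have hupper := mu_Gmpn_prod_cyc_le_twelve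
  have hlower := twelve_le_mu_Gmpn
  have hG : mu (Gmpn 4 4 3) = 12 := by omega
  have hGC : mu (Gmpn 4 4 3 × Cyc 4) = 12 := by omega
  refine ⟨⟨Gmpn 4 4 3, Cyc 4, inferInstance, inferInstance, inferInstance, inferInstance, ?_⟩,
    hGC, ?_⟩
  · rw [hGC, hG, mu_cyc_four]
    norm_num
  · rw [hG, mu_cyc_four]
end
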